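/- The dual set of an exceptional set, if it exists, is unique up to isomorphism, and the dual set equipped with the opposite ordering is itself an exceptional set. -/

import Mathlib

open CategoryTheory Limits Pretriangulated

universe v u

variable (k : Type*) [Field k]

variable (D : Type u) [Category.{v} D] [Preadditive D] [CategoryTheory.Linear k D]
  [HasZeroObject D] [HasShift D ℤ] [∀ n : ℤ, (shiftFunctor D n).Additive]
  [Pretriangulated D]

/-- `D` is of finite type over `k`: `⊕ₙ Hom(X, Y⟦n⟧)` is finite dimensional. -/
def FiniteType : Prop :=
  (∀ X Y : D, ∀ n : ℤ, FiniteDimensional k (X ⟶ (Y⟦n⟧ : D))) ∧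
    ∀ X Y : D, ∃ N : ℕ, ∀ n : ℤ, (N : ℤ) < |n| → ∀ f : X ⟶ (Y⟦n⟧ : D), f = 0

/-- An ordered family `E : I → D` is an exceptional set: `Hom^•(E i, E j) = 0` for
`i < j`, `Hom^n(E i, E i) = 0` for `n ≠ 0`, and `End (E i) = k`. -/
def IsExceptional {I : Type*} (lt : I → I → Prop) (E : I → D) : Prop :=
  (∀ i j, lt i j → ∀ n : ℤ, ∀ f : E i ⟶ ((E j)⟦n⟧ : D), f = 0) ∧
  (∀ i, ∀ n : ℤ, n ≠ 0 → ∀ f : E i ⟶ ((E i)⟦n⟧ : D), f = 0) ∧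
  (∀ i (f : E i ⟶ E i), ∃ c : k, f = c • 𝟙 (E i))

/-- Closure conditions for a strictly full triangulated subcategory. -/
structure IsTriangulatedSub (S : Set D) : Prop where
  zero_mem : ∀ Z : D, Limits.IsZero Z → Z ∈ S
  iso_closed : ∀ ⦃X Y : D⦄, (X ≅ Y) → X ∈ S → Y ∈ S
  shift_mem : ∀ (X : D) (n : ℤ), X ∈ S → (X⟦n⟧ : D) ∈ S
  ext_mem : ∀ (T : Triangle D), T ∈ (distTriang D) → T.obj₁ ∈ S → T.obj₃ ∈ S → T.obj₂ ∈ S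

/-- The full triangulated subcategory generated by a set of objects. -/
def genTriang (S : Set D) : Set D :=
  ⋂₀ {T : Set D | IsTriangulatedSub D T ∧ S ⊆ T}

/-- `X ≅ Y mod C`: the images of `X` and `Y` in the Verdier quotient `D/C` are
isomorphic; concretely, there is a morphism `X ⟶ Y` whose cone lies in `C`. -/
def IsoModulo (S : Set D) (X Y : D) : Prop :=
  ∃ (f : X ⟶ Y) (Z : D) (g : Y ⟶ Z) (h : Z ⟶ (X⟦(1:ℤ)⟧ : D)),
    Z ∈ S ∧ Triangle.mk f g h ∈ (distTriang D)

/-- Right orthogonal of a set of objects. -/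
def rightOrth (S : Set D) : Set D := {Y | ∀ (A : D), A ∈ S → ∀ f : A ⟶ Y, f = 0}

/-! The dual object `Δₙ` is the approximation of `Eₙ` from the left orthogonal of
`Cₙ = ⟨Eⱼ : j < n⟩`: `Hom^•(Δₙ, -)` vanishes on `Cₙ`, and the cone `Zₙ` of `Δₙ ⟶ Eₙ` lies
in `Cₙ`. Hence maps into `Eₙ` from objects orthogonal to `Cₙ` lift uniquely through `Δₙ`,
which gives uniqueness. Since `Hom^•(Cₙ, Eₙ) = 0` as well, maps from `Δₙ` to shifts of `Eₙ`
extend uniquely along `Δₙ ⟶ Eₙ`, so `Hom^•(Δₙ, Δₙ) ≅ Hom^•(Δₙ, Eₙ) ≅ Hom^•(Eₙ, Eₙ)`; and for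
`j < i`, `Δⱼ` is an extension of `Eⱼ` by `Zⱼ⟦-1⟧` with `Zⱼ ∈ Cᵢ`, both orthogonal to `Δᵢ`. -/

def ShiftOrthogonal {C : Type*} [Category C] [Preadditive C] [HasShift C ℤ] (A B : C) : Prop :=
  ∀ m : ℤ, ∀ f : A ⟶ (B⟦m⟧ : C), f = 0

lemma ShiftOrthogonal.eq_zero {C : Type*} [Category C] [Preadditive C] [HasShift C ℤ] {A B : C}
    (h : ShiftOrthogonal A B) (f : A ⟶ B) : f = 0 := by
  have h₀ := h 0 (f ≫ (shiftFunctorZero C ℤ).inv.app B)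
  rwa [Preadditive.IsIso.comp_right_eq_zero] at h₀

section DualExceptional

variable {k D}

lemma isTriangulatedSub_shiftOrthogonal_right (A : D) :
    IsTriangulatedSub D {X | ShiftOrthogonal A X} where
  zero_mem Z hZ m f := ((shiftFunctor D m).map_isZero hZ).eq_of_tgt f 0
  iso_closed X Y e hX m f := by
    have h₀ := hX m (f ≫ (shiftFunctor D m).map e.inv)
    rwa [Preadditive.IsIso.comp_right_eq_zero] at h₀
  shift_mem X n hX m f := by
    have h₀ := hX (n + m) (f ≫ (shiftFunctorAdd' D n m (n + m) rfl).inv.app X)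
    rwa [Preadditive.IsIso.comp_right_eq_zero] at h₀
  ext_mem T hT h₁ h₃ m f := by
    obtain ⟨g, rfl⟩ := Triangle.coyoneda_exact₂ _ (Triangle.shift_distinguished T hT m) f
      (h₃ m _)
    exact (h₁ m g).symm ▸ zero_comp

lemma isTriangulatedSub_shiftOrthogonal_left (B : D) :
    IsTriangulatedSub D {X | ShiftOrthogonal X B} where
  zero_mem Z hZ m f := hZ.eq_of_src f 0
  iso_closed X Y e hX m f := by
    have h₀ := hX m (e.hom ≫ f)
    rwa [Preadditive.IsIso.comp_left_eq_zero] at h₀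
  shift_mem X n hX m f := by
    have h₀ := hX (m + -n) ((shiftFunctorCompIsoId D n (-n) (add_neg_cancel n)).inv.app X ≫
      (shiftFunctor D (-n)).map f ≫ (shiftFunctorAdd' D m (-n) (m + -n) rfl).inv.app B)
    rwa [Preadditive.IsIso.comp_left_eq_zero, Preadditive.IsIso.comp_right_eq_zero,
      Functor.map_eq_zero_iff] at h₀
  ext_mem T hT h₁ h₃ m f := by
    obtain ⟨g, rfl⟩ := Triangle.yoneda_exact₂ _ hT f (h₁ m _)
    rw [h₃ m g, comp_zero]

lemma ShiftOrthogonal.shift_right {A B : D} (h : ShiftOrthogonal A B) (n : ℤ) :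
    ShiftOrthogonal A (B⟦n⟧) :=
  (isTriangulatedSub_shiftOrthogonal_right A).shift_mem B n h

lemma ShiftOrthogonal.shift_left {A B : D} (h : ShiftOrthogonal A B) (n : ℤ) :
    ShiftOrthogonal (A⟦n⟧) B :=
  (isTriangulatedSub_shiftOrthogonal_left B).shift_mem A n h

lemma genTriang_subset {S T : Set D} (hT : IsTriangulatedSub D T) (hST : S ⊆ T) :
    genTriang D S ⊆ T :=
  fun _ hX => hX T ⟨hT, hST⟩

lemma genTriang_mono {S T : Set D} (hST : S ⊆ T) : genTriang D S ⊆ genTriang D T :=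
  fun _ hX U hU => hX U ⟨hU.1, hST.trans hU.2⟩

section

variable {T : Triangle D} (hT : T ∈ distTriang D)
include hT

lemma cancel_mor₁_of_shiftOrthogonal {A : D} (hA : ShiftOrthogonal A T.obj₃)
    {φ₁ φ₂ : A ⟶ T.obj₁} (h : φ₁ ≫ T.mor₁ = φ₂ ≫ T.mor₁) : φ₁ = φ₂ := by
  rw [← sub_eq_zero]
  obtain ⟨e, he⟩ := Triangle.coyoneda_exact₂ _ (inv_rot_of_distTriang _ hT) (φ₁ - φ₂)
    (show (φ₁ - φ₂) ≫ T.mor₁ = 0 by rw [Preadditive.sub_comp, h, sub_self])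
  rw [he, hA (-1) e]
  exact zero_comp

lemma exists_lift_of_shiftOrthogonal {A : D} (hA : ShiftOrthogonal A T.obj₃)
    (u : A ⟶ T.obj₂) : ∃ φ : A ⟶ T.obj₁, u = φ ≫ T.mor₁ :=
  Triangle.coyoneda_exact₂ _ hT u (hA.eq_zero _)

lemma exists_extend_of_shiftOrthogonal {W : D} (hW : ShiftOrthogonal T.obj₃ W)
    (u : T.obj₁ ⟶ W) : ∃ v : T.obj₂ ⟶ W, u = T.mor₁ ≫ v :=
  Triangle.yoneda_exact₂ _ (inv_rot_of_distTriang _ hT) u ((hW.shift_left (-1)).eq_zero _)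

lemma shiftOrthogonal_obj₁ {A : D} (h₃ : ShiftOrthogonal A T.obj₃)
    (h₂ : ShiftOrthogonal A T.obj₂) : ShiftOrthogonal A T.obj₁ :=
  (isTriangulatedSub_shiftOrthogonal_right A).ext_mem _ (inv_rot_of_distTriang _ hT)
    (h₃.shift_right (-1)) h₂

end

lemma nonempty_iso_of_distTriang {C : Set D} {X X' E Z Z' : D}
    {f : X ⟶ E} {g : E ⟶ Z} {h : Z ⟶ X⟦(1 : ℤ)⟧} {f' : X' ⟶ E} {g' : E ⟶ Z'}
    {h' : Z' ⟶ X'⟦(1 : ℤ)⟧} (hT : Triangle.mk f g h ∈ distTriang D)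
    (hT' : Triangle.mk f' g' h' ∈ distTriang D) (hZ : Z ∈ C) (hZ' : Z' ∈ C)
    (hX : ∀ Y ∈ C, ShiftOrthogonal X Y) (hX' : ∀ Y ∈ C, ShiftOrthogonal X' Y) :
    Nonempty (X ≅ X') := by
  obtain ⟨φ, hφ⟩ : ∃ φ : X ⟶ X', f = φ ≫ f' :=
    exists_lift_of_shiftOrthogonal hT' (hX Z' hZ') f
  obtain ⟨ψ, hψ⟩ : ∃ ψ : X' ⟶ X, f' = ψ ≫ f :=
    exists_lift_of_shiftOrthogonal hT (hX' Z hZ) f'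
  refine ⟨⟨φ, ψ, cancel_mor₁_of_shiftOrthogonal hT (hX Z hZ) ?_,
    cancel_mor₁_of_shiftOrthogonal hT' (hX' Z' hZ') ?_⟩⟩
  · change (φ ≫ ψ) ≫ f = 𝟙 X ≫ f
    rw [Category.assoc, ← hψ, ← hφ, Category.id_comp]
  · change (ψ ≫ φ) ≫ f' = 𝟙 X' ≫ f'
    rw [Category.assoc, ← hφ, ← hψ, Category.id_comp]

section

variable {T : Triangle D} (hT : T ∈ distTriang D) (h₁₃ : ShiftOrthogonal T.obj₁ T.obj₃)
  (h₃₂ : ShiftOrthogonal T.obj₃ T.obj₂)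
include hT h₁₃ h₃₂

lemma shiftHom_obj₁_eq_zero {n : ℤ} (h₂ : ∀ v : T.obj₂ ⟶ T.obj₂⟦n⟧, v = 0)
    (φ : T.obj₁ ⟶ T.obj₁⟦n⟧) : φ = 0 := by
  have hφ : φ ≫ T.mor₁⟦n⟧' = 0 := by
    obtain ⟨v, hv⟩ := exists_extend_of_shiftOrthogonal hT (h₃₂.shift_right n) (φ ≫ T.mor₁⟦n⟧')
    rw [hv, h₂ v, comp_zero]
  refine cancel_mor₁_of_shiftOrthogonal (Triangle.shift_distinguished _ hT n)
    (h₁₃.shift_right n) (φ₂ := 0) ?_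
  change φ ≫ (n.negOnePow • T.mor₁⟦n⟧') = 0 ≫ _
  rw [Linear.comp_units_smul, hφ, smul_zero]
  exact zero_comp.symm

lemma exists_eq_smul_id_obj₁ (h₂ : ∀ v : T.obj₂ ⟶ T.obj₂, ∃ c : k, v = c • 𝟙 T.obj₂)
    (φ : T.obj₁ ⟶ T.obj₁) : ∃ c : k, φ = c • 𝟙 T.obj₁ := by
  obtain ⟨v, hv⟩ := exists_extend_of_shiftOrthogonal hT h₃₂ (φ ≫ T.mor₁)
  obtain ⟨c, rfl⟩ := h₂ v
  refine ⟨c, cancel_mor₁_of_shiftOrthogonal hT h₁₃ ?_⟩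
  rw [hv, Linear.comp_smul, Linear.smul_comp, Category.comp_id, Category.id_comp]

end

end DualExceptional

theorem stmt5 {I : Type*} [LinearOrder I]
    (E : I → D) (hE : IsExceptional k D (· < ·) E)
    (Δ Δ' : I → D)
    -- both `Δ` and `Δ'` are dual to `E`:
    (hdual₁ : ∀ n i : I, i < n → ∀ m : ℤ, ∀ f : Δ n ⟶ ((E i)⟦m⟧ : D), f = 0)
    (hdual₂ : ∀ n : I, IsoModulo D (genTriang D {X | ∃ j, j < n ∧ X = E j}) (Δ n) (E n))
    (hdual₁' : ∀ n i : I, i < n → ∀ m : ℤ, ∀ f : Δ' n ⟶ ((E i)⟦m⟧ : D), f = 0)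
    (hdual₂' : ∀ n : I, IsoModulo D (genTriang D {X | ∃ j, j < n ∧ X = E j}) (Δ' n) (E n)) :
    -- uniqueness up to isomorphism ...
    (∀ i : I, Nonempty (Δ i ≅ Δ' i)) ∧
    -- ... and `Δ` with the opposite order is an exceptional set
    IsExceptional k D (· > ·) Δ := by
  obtain ⟨hE_lt, hE_shift, hE_end⟩ := hE
  set G : I → Set D := fun n => genTriang D {X | ∃ j, j < n ∧ X = E j}
  have hG_mono : Monotone G := fun i j hij => genTriang_mono <| by
    rintro _ ⟨l, hl, rfl⟩
    exact ⟨l, hl.trans_le hij, rfl⟩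
  have hΔ_G : ∀ n, ∀ Y ∈ G n, ShiftOrthogonal (Δ n) Y := fun n =>
    genTriang_subset (isTriangulatedSub_shiftOrthogonal_right _) <| by
      rintro _ ⟨j, hj, rfl⟩
      exact hdual₁ n j hj
  have hΔ'_G : ∀ n, ∀ Y ∈ G n, ShiftOrthogonal (Δ' n) Y := fun n =>
    genTriang_subset (isTriangulatedSub_shiftOrthogonal_right _) <| by
      rintro _ ⟨j, hj, rfl⟩
      exact hdual₁' n j hj
  have hG_E : ∀ n, ∀ Y ∈ G n, ShiftOrthogonal Y (E n) := fun n =>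
    genTriang_subset (isTriangulatedSub_shiftOrthogonal_left _) <| by
      rintro _ ⟨j, hj, rfl⟩
      exact hE_lt j n hj
  choose f Z g h hZ hT using hdual₂
  choose f' Z' g' h' hZ' hT' using hdual₂'
  refine ⟨fun n => nonempty_iso_of_distTriang (hT n) (hT' n) (hZ n) (hZ' n) (hΔ_G n) (hΔ'_G n),
    fun i j hji => ?_, fun n m hm => ?_, fun n => ?_⟩
  · exact shiftOrthogonal_obj₁ (hT j) (hΔ_G i _ (hG_mono hji.le (hZ j))) (hdual₁ i j hji)
  · exact shiftHom_obj₁_eq_zero (hT n) (hΔ_G n _ (hZ n)) (hG_E n _ (hZ n)) (hE_shift n m hm)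
  · exact exists_eq_smul_id_obj₁ (hT n) (hΔ_G n _ (hZ n)) (hG_E n _ (hZ n)) (hE_end n)
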